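/- arXiv:2504.04594 — 4 statements merged into one kernel-verified Lean document; each statement's English description precedes it below -/
import Mathlib

section
/- Let w > 0, s ≥ 1, δ > 0, and let p, q ∈ ℝ² satisfy |p_y| < |q_y| ≤ δ, with p_y and q_y having the same sign, |p_y| ≥ 4s·√(δ² − p_y²), |q_y| ≥ 4s·√(δ² − q_y²), and |p_x − q_x| ≤ 2s·|p_y − q_y|. Define a_x = p_x + √(δ² − p_y²) and b_x = q_x + √(δ² − q_y²). Then a_x > b_x. -/
/-- Monotonicity for steep pairs. -/
theorem stmt_1 (w s δ : ℝ) (hw : 0 < w) (hs : 1 ≤ s) (hδ : 0 < δ)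
    (p q : ℝ × ℝ)
    (hlt : |p.2| < |q.2|) (hqδ : |q.2| ≤ δ)
    (hsign : 0 ≤ p.2 * q.2)
    (hpsteep : 4 * s * Real.sqrt (δ ^ 2 - p.2 ^ 2) ≤ |p.2|)
    (hqsteep : 4 * s * Real.sqrt (δ ^ 2 - q.2 ^ 2) ≤ |q.2|)
    (hx : |p.1 - q.1| ≤ 2 * s * |p.2 - q.2|) :
    q.1 + Real.sqrt (δ ^ 2 - q.2 ^ 2) < p.1 + Real.sqrt (δ ^ 2 - p.2 ^ 2) := by
  set A := Real.sqrt (δ ^ 2 - p.2 ^ 2) with hAdef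
  set B := Real.sqrt (δ ^ 2 - q.2 ^ 2) with hBdef
  have hs0 : (0:ℝ) < s := lt_of_lt_of_le one_pos hs
  have hpq : |p.2| < δ := lt_of_lt_of_le hlt hqδ
  have hqnn : (0:ℝ) ≤ δ ^ 2 - q.2 ^ 2 := by
    have h := sq_abs q.2
    nlinarith [abs_nonneg q.2]
  have hppos : (0:ℝ) < δ ^ 2 - p.2 ^ 2 := by
    have h := sq_abs p.2
    nlinarith [abs_nonneg p.2]
  have hA2 : A ^ 2 = δ ^ 2 - p.2 ^ 2 := Real.sq_sqrt (le_of_lt hppos)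
  have hB2 : B ^ 2 = δ ^ 2 - q.2 ^ 2 := Real.sq_sqrt hqnn
  have hA0 : 0 < A := Real.sqrt_pos.mpr hppos
  have hB0 : 0 ≤ B := Real.sqrt_nonneg _
  have hdiff : |p.2 - q.2| = |q.2| - |p.2| := by
    rcases lt_trichotomy q.2 0 with hq | hq | hq
    · have hp : p.2 ≤ 0 := by nlinarith
      have hgt : q.2 ≤ p.2 := by
        have h1 := abs_of_nonpos hp
        have h2 := abs_of_neg hq
        linarith
      rw [abs_of_nonneg (by linarith : 0 ≤ p.2 - q.2), abs_of_nonpos hp, abs_of_neg hq]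
      ring
    · exfalso
      rw [hq, abs_zero] at hlt
      exact absurd hlt (not_lt.mpr (abs_nonneg _))
    · have hp : 0 ≤ p.2 := by nlinarith
      have hgt : p.2 ≤ q.2 := by
        have h1 := abs_of_nonneg hp
        have h2 := abs_of_pos hq
        linarith
      rw [abs_of_nonpos (by linarith : p.2 - q.2 ≤ 0), abs_of_nonneg hp, abs_of_pos hq]
      ring
  have hsqp : (|q.2| - |p.2|) * (|q.2| + |p.2|) = q.2 ^ 2 - p.2 ^ 2 := by
    have h1 := sq_abs q.2
    have h2 := sq_abs p.2
    nlinarith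
  have h2' : (A - B) * (A + B) = (|q.2| - |p.2|) * (|q.2| + |p.2|) := by
    have : (A - B) * (A + B) = A ^ 2 - B ^ 2 := by ring
    rw [this, hA2, hB2, hsqp]; ring
  have hABpos : 0 < A + B := by linarith
  have hnm : 0 < |q.2| - |p.2| := by linarith
  have h1 : 4 * s * (A + B) ≤ |p.2| + |q.2| := by linarith
  have key : 4 * s * (|q.2| - |p.2|) ≤ A - B := by
    have h3 : 4 * s * (|q.2| - |p.2|) * (A + B) ≤ (A - B) * (A + B) := by
      calc 4 * s * (|q.2| - |p.2|) * (A + B)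
          = 4 * s * (A + B) * (|q.2| - |p.2|) := by ring
        _ ≤ (|p.2| + |q.2|) * (|q.2| - |p.2|) :=
            mul_le_mul_of_nonneg_right h1 (le_of_lt hnm)
        _ = (|q.2| - |p.2|) * (|q.2| + |p.2|) := by ring
        _ = (A - B) * (A + B) := h2'.symm
    exact le_of_mul_le_mul_right h3 hABpos
  have hx' : q.1 - p.1 ≤ 2 * s * (|q.2| - |p.2|) := by
    rw [hdiff] at hx
    have h := neg_abs_le (p.1 - q.1)
    linarith
  have hstrict : 2 * s * (|q.2| - |p.2|) < 4 * s * (|q.2| - |p.2|) := by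
    linarith [mul_pos hs0 hnm]
  linarith
end

section
/- Fix w > 0, s ≥ 1, and δ > 0. Let p, p* ∈ ℝ² with |p − p*| ≤ w (Euclidean distance), |p_y| ≥ w, |p_y| ≤ δ, |p*_y| ≤ δ, and suppose 3w·|p_y|/√(δ² − p_y²) ≤ 12ws (the 'shallow' condition, equivalently |p_y| ≤ 4s·√(δ² − p_y²)). Define a_x = p_x + √(δ² − p_y²) and φ = p*_x + √(δ² − (p*_y)²). Then |a_x − φ| ≤ 13ws. -/
set_option maxHeartbeats 1000000 in
/-- Claim shallow-wiggle: moving a shallow point `p` to a nearby point `p*`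
moves the corresponding foot point on the x-axis by at most `13ws`. -/
theorem stmt_3 (w s δ : ℝ) (hw : 0 < w) (hs : 1 ≤ s) (hδ : 0 < δ)
    (p ps : ℝ × ℝ)
    (hclose : Real.sqrt ((p.1 - ps.1) ^ 2 + (p.2 - ps.2) ^ 2) ≤ w)
    (hpy : w ≤ |p.2|) (hpδ : |p.2| ≤ δ) (hpsδ : |ps.2| ≤ δ)
    (hshallow : |p.2| ≤ 4 * s * Real.sqrt (δ ^ 2 - p.2 ^ 2)) :
    |(p.1 + Real.sqrt (δ ^ 2 - p.2 ^ 2))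
      - (ps.1 + Real.sqrt (δ ^ 2 - ps.2 ^ 2))| ≤ 13 * w * s := by
  set a := Real.sqrt (δ ^ 2 - p.2 ^ 2) with ha
  set b := Real.sqrt (δ ^ 2 - ps.2 ^ 2) with hb
  have hAnn : 0 ≤ δ ^ 2 - p.2 ^ 2 := by nlinarith [sq_abs p.2, abs_nonneg p.2]
  have hBnn : 0 ≤ δ ^ 2 - ps.2 ^ 2 := by nlinarith [sq_abs ps.2, abs_nonneg ps.2]
  have ha2 : a ^ 2 = δ ^ 2 - p.2 ^ 2 := Real.sq_sqrt hAnn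
  have hb2 : b ^ 2 = δ ^ 2 - ps.2 ^ 2 := Real.sq_sqrt hBnn
  have hann : 0 ≤ a := Real.sqrt_nonneg _
  have hbnn : 0 ≤ b := Real.sqrt_nonneg _
  have hapos : 0 < a := by nlinarith [hw.trans_le (hpy.trans hshallow)]
  -- componentwise closeness
  have h1 : |p.1 - ps.1| ≤ w := by
    rw [← Real.sqrt_sq_eq_abs]
    exact le_trans (Real.sqrt_le_sqrt (by nlinarith [sq_nonneg (p.2 - ps.2)])) hclose
  have h2 : |p.2 - ps.2| ≤ w := by
    rw [← Real.sqrt_sq_eq_abs]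
    exact le_trans (Real.sqrt_le_sqrt (by nlinarith [sq_nonneg (p.1 - ps.1)])) hclose
  -- bound the sqrt difference
  have key : |a - b| * (a + b) ≤ w * (2 * |p.2| + w) := by
    have : |a - b| * (a + b) = |a ^ 2 - b ^ 2| := by
      rw [← abs_of_nonneg (by linarith : (0:ℝ) ≤ a + b), ← abs_mul]
      ring_nf
    rw [this, ha2, hb2]
    have : |δ ^ 2 - p.2 ^ 2 - (δ ^ 2 - ps.2 ^ 2)| = |p.2 - ps.2| * |p.2 + ps.2| := by
      rw [← abs_mul]; ring_nf; rw [abs_sub_comm]; ring_nf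
    rw [this]
    have hsum : |p.2 + ps.2| ≤ 2 * |p.2| + w :=
      calc |p.2 + ps.2| = |2 * p.2 - (p.2 - ps.2)| := by ring_nf
        _ ≤ |2 * p.2| + |p.2 - ps.2| := abs_sub _ _
        _ ≤ 2 * |p.2| + w := by rw [abs_mul, abs_two]; linarith
    exact mul_le_mul h2 hsum (abs_nonneg _) hw.le
  have hab : |a - b| ≤ 12 * w * s := by
    have h3 : |a - b| * a ≤ w * (2 * |p.2| + w) := by
      nlinarith [abs_nonneg (a - b), key]
    have hw4 : w ≤ 4 * s * a := hpy.trans hshallow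
    have h5 : |a - b| * a ≤ 12 * w * s * a := by
      nlinarith [mul_le_mul_of_nonneg_left hshallow hw.le,
        mul_le_mul_of_nonneg_left hw4 hw.le]
    exact le_of_mul_le_mul_right h5 hapos
  calc |(p.1 + a) - (ps.1 + b)| ≤ |p.1 - ps.1| + |a - b| := by
        have : (p.1 + a) - (ps.1 + b) = (p.1 - ps.1) + (a - b) := by ring
        rw [this]; exact abs_add_le _ _
    _ ≤ w + 12 * w * s := by linarith
    _ ≤ 13 * w * s := by nlinarith
end

section
/- Let ℓ ≥ 1, t ∈ (0,1], m, n ≥ 1, and let a₁ ≤ a₂ ≤ … ≤ a_ℓ be integers in {1,…,m} and b₁ ≤ … ≤ b_ℓ integers in {1,…,n}. Let s = ⌈tℓ/8⌉ − 1. Then the number of indices 1 ≤ j ≤ ℓ − s with a_{j+s} − a_j > tm is at most ℓ/8, and the number of indices j with b_{j+s} − b_j > tn is at most ℓ/8; consequently, at least ℓ/2 indices j ∈ {1,…,ℓ−s} satisfy both a_{j+s} − a_j ≤ tm and b_{j+s} − b_j ≤ tn (assuming ℓ − s − ℓ/4 ≥ ℓ/2, which holds since s ≤ tℓ/8 ≤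 ℓ/8). -/
private lemma mono_steps (ℓ : ℕ) (a : ℕ → ℕ)
    (h : ∀ j, 1 ≤ j → j < ℓ → a j ≤ a (j + 1)) :
    ∀ k j, 1 ≤ j → j + k ≤ ℓ → a j ≤ a (j + k) := by
  intro k
  induction k with
  | zero => intro j _ _; simp
  | succ k ih =>
    intro j hj hk
    have h1 : a j ≤ a (j + k) := ih j hj (by omega)
    have h2 : a (j + k) ≤ a (j + k + 1) := h (j + k) (by omega) (by omega)
    calc a j ≤ a (j + k) := h1
      _ ≤ a (j + (k + 1)) := by rw [← add_assoc]; exact h2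

private lemma gap_bound (ℓ m s : ℕ) (t : ℝ) (ht : 0 < t) (hm : 1 ≤ m) (hsl : s ≤ ℓ)
    (hsle : (s : ℝ) ≤ t * ℓ / 8)
    (a : ℕ → ℕ)
    (hmono : ∀ j, 1 ≤ j → j + s ≤ ℓ → a j ≤ a (j + s))
    (hub : ∀ j ∈ Finset.Icc 1 ℓ, a j ≤ m) :
    (((Finset.Icc 1 (ℓ - s)).filter (fun j => t * m < (a (j + s) : ℝ) - a j)).card : ℝ)
      ≤ (ℓ : ℝ) / 8 := by
  set L := ℓ - s with hL
  have hLs : L + s = ℓ := by omega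
  have hf : ∀ j ∈ Finset.Icc 1 L, (0:ℝ) ≤ (a (j + s) : ℝ) - a j := by
    intro j hj
    rw [Finset.mem_Icc] at hj
    have := hmono j hj.1 (by omega)
    have : (a j : ℝ) ≤ a (j + s) := by exact_mod_cast this
    linarith
  -- telescoping sum bound
  have hshift : ∑ j ∈ Finset.Icc 1 L, ((a (j + s) : ℝ)) =
      ∑ j ∈ Finset.Icc (1 + s) (L + s), (a j : ℝ) := by
    rw [← Finset.map_add_right_Icc, Finset.sum_map]
    rfl
  have hsum : ∑ j ∈ Finset.Icc 1 L, ((a (j + s) : ℝ) - a j) ≤ (s : ℝ) * m := by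
    rw [Finset.sum_sub_distrib, hshift]
    have e1 : Finset.Icc (1 + s) (L + s) = Finset.Ico (s + 1) (ℓ + 1) := by
      rw [Finset.Ico_add_one_right_eq_Icc]
      congr 1
      omega
    have e2 : Finset.Icc 1 L = Finset.Ico 1 (L + 1) := (Finset.Ico_add_one_right_eq_Icc 1 L).symm
    have split1 : (∑ j ∈ Finset.Ico 1 (s + 1), (a j : ℝ)) +
        ∑ j ∈ Finset.Ico (s + 1) (ℓ + 1), (a j : ℝ) = ∑ j ∈ Finset.Ico 1 (ℓ + 1), (a j : ℝ) :=
      Finset.sum_Ico_consecutive _ (by omega) (by omega)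
    have split2 : (∑ j ∈ Finset.Ico 1 (L + 1), (a j : ℝ)) +
        ∑ j ∈ Finset.Ico (L + 1) (ℓ + 1), (a j : ℝ) = ∑ j ∈ Finset.Ico 1 (ℓ + 1), (a j : ℝ) :=
      Finset.sum_Ico_consecutive _ (by omega) (by omega)
    have hb1 : ∑ j ∈ Finset.Ico (L + 1) (ℓ + 1), (a j : ℝ) ≤ (s : ℝ) * m := by
      have : ∑ j ∈ Finset.Ico (L + 1) (ℓ + 1), (a j : ℝ) ≤
          ∑ _j ∈ Finset.Ico (L + 1) (ℓ + 1), (m : ℝ) := by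
        apply Finset.sum_le_sum
        intro j hj
        rw [Finset.mem_Ico] at hj
        exact_mod_cast hub j (Finset.mem_Icc.mpr ⟨by omega, by omega⟩)
      rw [Finset.sum_const, Nat.card_Ico] at this
      have hcard : ℓ + 1 - (L + 1) = s := by omega
      rw [hcard] at this
      simpa [nsmul_eq_mul] using this
    have hb2 : (0:ℝ) ≤ ∑ j ∈ Finset.Ico 1 (s + 1), (a j : ℝ) :=
      Finset.sum_nonneg fun j _ => by positivity
    rw [e1, e2]
    linarith
  set bad := (Finset.Icc 1 L).filter (fun j => t * m < (a (j + s) : ℝ) - a j) with hbad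
  have hcard : (bad.card : ℝ) * (t * m) ≤ ∑ j ∈ Finset.Icc 1 L, ((a (j + s) : ℝ) - a j) := by
    calc (bad.card : ℝ) * (t * m) = ∑ _j ∈ bad, (t * m) := by
          rw [Finset.sum_const, nsmul_eq_mul]
      _ ≤ ∑ j ∈ bad, ((a (j + s) : ℝ) - a j) := by
          apply Finset.sum_le_sum
          intro j hj
          rw [hbad, Finset.mem_filter] at hj
          exact le_of_lt hj.2
      _ ≤ ∑ j ∈ Finset.Icc 1 L, ((a (j + s) : ℝ) - a j) := by
          apply Finset.sum_le_sum_of_subset_of_nonneg (Finset.filter_subset _ _)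
          intro j hj _
          exact hf j hj
  have htm : (0:ℝ) < t * m := by
    have : (1:ℝ) ≤ m := by exact_mod_cast hm
    positivity
  have h1 : (bad.card : ℝ) * (t * m) ≤ (t * ℓ / 8) * m := by
    have : (s : ℝ) * m ≤ (t * ℓ / 8) * m := by
      apply mul_le_mul_of_nonneg_right hsle (by positivity)
    linarith
  have hm' : (0:ℝ) < m := by exact_mod_cast hm
  nlinarith [mul_pos ht hm']

/-- Telescoping bound: few indices have large gaps, so at least ℓ/2 indices
are simultaneously t-close in both coordinates. -/
theorem stmt_11 (ℓ m n : ℕ) (hℓ : 1 ≤ ℓ) (hm : 1 ≤ m) (hn : 1 ≤ n)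
    (t : ℝ) (ht0 : 0 < t) (ht1 : t ≤ 1)
    (a b : ℕ → ℕ)
    (ha_mono : ∀ j, 1 ≤ j → j < ℓ → a j ≤ a (j + 1))
    (hb_mono : ∀ j, 1 ≤ j → j < ℓ → b j ≤ b (j + 1))
    (ha_range : ∀ j ∈ Finset.Icc 1 ℓ, a j ∈ Finset.Icc 1 m)
    (hb_range : ∀ j ∈ Finset.Icc 1 ℓ, b j ∈ Finset.Icc 1 n)
    (s : ℕ) (hs : s = ⌈t * ℓ / 8⌉₊ - 1) :
    (Set.ncard {j : ℕ | j ∈ Finset.Icc 1 (ℓ - s) ∧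
        t * m < (a (j + s) : ℝ) - (a j : ℝ)} : ℝ) ≤ ℓ / 8 ∧
    (Set.ncard {j : ℕ | j ∈ Finset.Icc 1 (ℓ - s) ∧
        t * n < (b (j + s) : ℝ) - (b j : ℝ)} : ℝ) ≤ ℓ / 8 ∧
    (ℓ : ℝ) / 2 ≤ (Set.ncard {j : ℕ | j ∈ Finset.Icc 1 (ℓ - s) ∧
        (a (j + s) : ℝ) - (a j : ℝ) ≤ t * m ∧
        (b (j + s) : ℝ) - (b j : ℝ) ≤ t * n} : ℝ) := by
  -- basic facts about s
  have hx : (0:ℝ) < t * ℓ / 8 := by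
    have : (1:ℝ) ≤ ℓ := by exact_mod_cast hℓ
    positivity
  have hceil : 1 ≤ ⌈t * ℓ / 8⌉₊ := Nat.one_le_iff_ne_zero.mpr (by
    intro h
    have := Nat.ceil_pos.mpr hx
    omega)
  have hsle : (s : ℝ) ≤ t * ℓ / 8 := by
    have h1 : (⌈t * ℓ / 8⌉₊ : ℝ) < t * ℓ / 8 + 1 := Nat.ceil_lt_add_one (le_of_lt hx)
    have h2 : (s : ℝ) = (⌈t * ℓ / 8⌉₊ : ℝ) - 1 := by
      rw [hs, Nat.cast_sub hceil, Nat.cast_one]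
    linarith
  have hsl8 : (s : ℝ) ≤ (ℓ : ℝ) / 8 := by
    have hℓ0 : (0:ℝ) ≤ ℓ := by positivity
    nlinarith
  have hsl : s ≤ ℓ := by
    by_contra h
    push_neg at h
    have : (ℓ : ℝ) < s := by exact_mod_cast h
    have hℓ1 : (1:ℝ) ≤ ℓ := by exact_mod_cast hℓ
    linarith
  set L := ℓ - s with hLdef
  -- convert ncard to Finset card
  have hset : ∀ (P : ℕ → Prop) [DecidablePred P],
      {j : ℕ | j ∈ Finset.Icc 1 L ∧ P j} = ((Finset.Icc 1 L).filter P : Finset ℕ) := by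
    intro P _
    ext j
    simp [Finset.mem_filter]
  have hmono_a := mono_steps ℓ a ha_mono s
  have hmono_b := mono_steps ℓ b hb_mono s
  have hba := gap_bound ℓ m s t ht0 hm hsl hsle a
    (fun j hj hjs => hmono_a j hj hjs)
    (fun j hj => (Finset.mem_Icc.mp (ha_range j hj)).2)
  have hbb := gap_bound ℓ n s t ht0 hn hsl hsle b
    (fun j hj hjs => hmono_b j hj hjs)
    (fun j hj => (Finset.mem_Icc.mp (hb_range j hj)).2)
  set badA := (Finset.Icc 1 L).filter (fun j => t * m < (a (j + s) : ℝ) - a j) with hbadA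
  set badB := (Finset.Icc 1 L).filter (fun j => t * n < (b (j + s) : ℝ) - b j) with hbadB
  set good := (Finset.Icc 1 L).filter (fun j =>
      (a (j + s) : ℝ) - a j ≤ t * m ∧ (b (j + s) : ℝ) - b j ≤ t * n) with hgood
  have hA : (Set.ncard {j : ℕ | j ∈ Finset.Icc 1 L ∧
      t * m < (a (j + s) : ℝ) - (a j : ℝ)} : ℝ) = (badA.card : ℝ) := by
    rw [hset _, Set.ncard_coe_finset]
  have hB : (Set.ncard {j : ℕ | j ∈ Finset.Icc 1 L ∧
      t * n < (b (j + s) : ℝ) - (b j : ℝ)} : ℝ) = (badB.card : ℝ) := by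
    rw [hset _, Set.ncard_coe_finset]
  have hG : (Set.ncard {j : ℕ | j ∈ Finset.Icc 1 L ∧
      (a (j + s) : ℝ) - (a j : ℝ) ≤ t * m ∧ (b (j + s) : ℝ) - (b j : ℝ) ≤ t * n} : ℝ)
      = (good.card : ℝ) := by
    rw [hset _, Set.ncard_coe_finset]
  refine ⟨by rw [hA]; exact hba, by rw [hB]; exact hbb, ?_⟩
  rw [hG]
  -- F ⊆ good ∪ badA ∪ badB
  have hcover : Finset.Icc 1 L ⊆ good ∪ badA ∪ badB := by
    intro j hj
    by_cases h1 : t * m < (a (j + s) : ℝ) - a j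
    · exact Finset.mem_union.mpr (Or.inl (Finset.mem_union.mpr (Or.inr
        (Finset.mem_filter.mpr ⟨hj, h1⟩))))
    · by_cases h2 : t * n < (b (j + s) : ℝ) - b j
      · exact Finset.mem_union.mpr (Or.inr (Finset.mem_filter.mpr ⟨hj, h2⟩))
      · exact Finset.mem_union.mpr (Or.inl (Finset.mem_union.mpr (Or.inl
          (Finset.mem_filter.mpr ⟨hj, not_lt.mp h1, not_lt.mp h2⟩))))
  have hcards : (Finset.Icc 1 L).card ≤ good.card + badA.card + badB.card := by
    calc (Finset.Icc 1 L).card ≤ (good ∪ badA ∪ badB).card := Finset.card_le_card hcover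
      _ ≤ (good ∪ badA).card + badB.card := Finset.card_union_le _ _
      _ ≤ good.card + badA.card + badB.card := by
          have := Finset.card_union_le good badA
          omega
  have hFcard : ((Finset.Icc 1 L).card : ℝ) = (ℓ : ℝ) - s := by
    rw [Nat.card_Icc]
    have : L + 1 - 1 = ℓ - s := by omega
    rw [this, Nat.cast_sub hsl]
  have hcardR : ((Finset.Icc 1 L).card : ℝ) ≤ (good.card : ℝ) + badA.card + badB.card := by
    exact_mod_cast hcards
  linarith
end

section
/- Let ℓ ≥ 1, t ∈ (0,1], and let (a₁, p₁), …, (a_ℓ, p_ℓ) be a sequence of pairs where the a-indices a_j ∈ {1,…,m} are nondecreasing and the p-indices p_j ∈ {1,…,n} are nondecreasing. Then the number of pairs of indices (j, j') with j ≤ j' such that a_{j'} − a_j ≤ tm and p_{j'} − p_j ≤ tn is at least tℓ²/16. -/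
/-!
Cut `[0, m] × [0, n]` into cells of side `tm × tn` and give the cell `(A, P)` the index `A + P`.
Both cell coordinates are monotone along the list, so two positions `j ≤ j'` with the same index
lie in the same cell and are `t`-close. There are at most `2⌊1/t⌋ + 1 ≤ 3/t` indices, so by
Cauchy–Schwarz over the index classes, `ℓ² ≤ (3/t) · Σ (class size)² ≤ (6/t) · #(close pairs)`.
-/

open Finset

section FiberPairs

variable {α β : Type*} [DecidableEq β]

theorem sq_card_le_card_image_mul_card_filter_eq (s : Finset α) (f : α → β) :
    #s ^ 2 ≤ #(s.image f) * #{x ∈ s ×ˢ s | f x.1 = f x.2} := by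
  have hfiber (v : β) : {x ∈ {x ∈ s ×ˢ s | f x.1 = f x.2} | f x.1 = v} =
      {a ∈ s | f a = v} ×ˢ {a ∈ s | f a = v} := by
    ext x
    simp only [mem_filter, mem_product]
    constructor
    · rintro ⟨⟨⟨h1, h2⟩, he⟩, rfl⟩
      exact ⟨⟨h1, rfl⟩, h2, he.symm⟩
    · rintro ⟨⟨h1, rfl⟩, h2, he⟩
      exact ⟨⟨⟨h1, h2⟩, he.symm⟩, rfl⟩
  calc #s ^ 2 = (∑ v ∈ s.image f, #{a ∈ s | f a = v}) ^ 2 := by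
        rw [← card_eq_sum_card_fiberwise fun a ha => mem_image_of_mem f ha]
    _ ≤ #(s.image f) * ∑ v ∈ s.image f, #{a ∈ s | f a = v} ^ 2 := sq_sum_le_card_mul_sum_sq
    _ = #(s.image f) * #{x ∈ s ×ˢ s | f x.1 = f x.2} := by
        rw [card_eq_sum_card_fiberwise (f := fun x => f x.1) (t := s.image f)
          fun x hx => mem_image_of_mem f (mem_product.1 (mem_filter.1 hx).1).1]
        simp only [hfiber, card_product, sq]

theorem card_filter_le_two_mul_card_filter_le [LinearOrder α] (s : Finset α)
    (r : α → α → Prop) [DecidableRel r] (hr : ∀ i j, r i j → r j i) :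
    #{x ∈ s ×ˢ s | r x.1 x.2} ≤ 2 * #{x ∈ s ×ˢ s | x.1 ≤ x.2 ∧ r x.1 x.2} := by
  set T := {x ∈ s ×ˢ s | x.1 ≤ x.2 ∧ r x.1 x.2}
  have hsub : {x ∈ s ×ˢ s | r x.1 x.2} ⊆ T ∪ T.image Prod.swap := by
    rintro ⟨i, j⟩ hx
    simp only [mem_filter, mem_product] at hx
    rcases le_total i j with hij | hji
    · exact mem_union_left _ (by simp [T, hx, hij])
    · exact mem_union_right _ (mem_image.2 ⟨(j, i), by simp [T, hx, hji, hr i j hx.2], rfl⟩)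
  calc _ ≤ #(T ∪ T.image Prod.swap) := card_le_card hsub
    _ ≤ #T + #T := (card_union_le _ _).trans (Nat.add_le_add_left card_image_le _)
    _ = 2 * #T := (two_mul _).symm

theorem sq_card_le_two_mul_card_image_mul_card_pairs [LinearOrder α] (s : Finset α)
    (f : α → β) :
    #s ^ 2 ≤ 2 * #(s.image f) * #{x ∈ s ×ˢ s | x.1 ≤ x.2 ∧ f x.1 = f x.2} :=
  calc #s ^ 2 ≤ #(s.image f) * #{x ∈ s ×ˢ s | f x.1 = f x.2} :=
        sq_card_le_card_image_mul_card_filter_eq s f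
    _ ≤ #(s.image f) * (2 * #{x ∈ s ×ˢ s | x.1 ≤ x.2 ∧ f x.1 = f x.2}) :=
        Nat.mul_le_mul_left _
          (card_filter_le_two_mul_card_filter_le s (fun i j => f i = f j) fun _ _ => Eq.symm)
    _ = _ := by ring

end FiberPairs

lemma card_Icc_zero_two_mul_floor_inv_le {t : ℝ} (ht0 : 0 < t) (ht1 : t ≤ 1) :
    (#(Icc (0 : ℤ) (2 * ⌊t⁻¹⌋)) : ℝ) ≤ 3 / t := by
  have hone : (1 : ℝ) ≤ t⁻¹ := one_le_inv_iff₀.2 ⟨ht0, ht1⟩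
  have hfloor : (⌊t⁻¹⌋ : ℝ) ≤ t⁻¹ := Int.floor_le _
  have hnonneg : (0 : ℤ) ≤ ⌊t⁻¹⌋ := Int.floor_nonneg.2 (by linarith)
  have hcard : ((2 * ⌊t⁻¹⌋ + 1).toNat : ℝ) = 2 * ⌊t⁻¹⌋ + 1 := by
    exact_mod_cast Int.toNat_of_nonneg (by omega)
  rw [Int.card_Icc, sub_zero, hcard, div_eq_mul_inv]
  linarith

theorem mul_sq_card_le_six_mul_card_pairs {α : Type*} [LinearOrder α] {t : ℝ} (ht0 : 0 < t)
    (ht1 : t ≤ 1) (s : Finset α) (f : α → ℤ) (hf : ∀ i ∈ s, f i ∈ Icc 0 (2 * ⌊t⁻¹⌋)) :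
    t * #s ^ 2 ≤ 6 * #{x ∈ s ×ˢ s | x.1 ≤ x.2 ∧ f x.1 = f x.2} := by
  have hcount : (#s ^ 2 : ℝ) ≤ 2 * #(s.image f) * #{x ∈ s ×ˢ s | x.1 ≤ x.2 ∧ f x.1 = f x.2} := by
    exact_mod_cast sq_card_le_two_mul_card_image_mul_card_pairs s f
  have himage : t * #(s.image f) ≤ 3 := by
    have hcard : (#(s.image f) : ℝ) ≤ 3 / t :=
      (Nat.cast_le.2 (card_le_card (image_subset_iff.2 hf))).trans
        (card_Icc_zero_two_mul_floor_inv_le ht0 ht1)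
    calc t * #(s.image f) ≤ t * (3 / t) := by gcongr
      _ = 3 := by field_simp
  nlinarith [mul_le_mul_of_nonneg_left hcount ht0.le]

lemma sub_lt_of_floor_div_eq {x y c : ℝ} (hc : 0 < c) (h : ⌊x / c⌋ = ⌊y / c⌋) : y - x < c := by
  have := (abs_lt.1 (Int.abs_sub_lt_one_of_floor_eq_floor h.symm)).2
  rwa [← sub_div, div_lt_one hc] at this

lemma sub_lt_of_floor_add_floor_eq {x x' y y' c d : ℝ} (hc : 0 < c) (hd : 0 < d) (hx : x ≤ x')
    (hy : y ≤ y') (h : ⌊x / c⌋ + ⌊y / d⌋ = ⌊x' / c⌋ + ⌊y' / d⌋) : x' - x < c ∧ y' - y < d := by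
  have hxc : ⌊x / c⌋ ≤ ⌊x' / c⌋ := Int.floor_le_floor (by gcongr)
  have hyd : ⌊y / d⌋ ≤ ⌊y' / d⌋ := Int.floor_le_floor (by gcongr)
  exact ⟨sub_lt_of_floor_div_eq hc (by omega), sub_lt_of_floor_div_eq hd (by omega)⟩

lemma floor_cast_div_mul_mem_Icc {t : ℝ} (ht : 0 < t) {x m : ℕ} (hm : 1 ≤ m) (hxm : x ≤ m) :
    ⌊(x : ℝ) / (t * m)⌋ ∈ Icc 0 ⌊t⁻¹⌋ := by
  have hm' : (0 : ℝ) < m := Nat.cast_pos.2 hm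
  refine mem_Icc.2 ⟨Int.floor_nonneg.2 (by positivity), Int.floor_le_floor ?_⟩
  calc (x : ℝ) / (t * m) ≤ m / (t * m) := by gcongr
    _ = t⁻¹ := by field_simp

noncomputable def cellIndex (t : ℝ) (m n : ℕ) (x : ℕ × ℕ) : ℤ :=
  ⌊(x.1 : ℝ) / (t * m)⌋ + ⌊(x.2 : ℝ) / (t * n)⌋

lemma cellIndex_mem_Icc {t : ℝ} (ht : 0 < t) {m n : ℕ} (hm : 1 ≤ m) (hn : 1 ≤ n) {x : ℕ × ℕ}
    (hx1 : x.1 ≤ m) (hx2 : x.2 ≤ n) : cellIndex t m n x ∈ Icc 0 (2 * ⌊t⁻¹⌋) := by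
  have h1 := mem_Icc.1 (floor_cast_div_mul_mem_Icc ht hm hx1)
  have h2 := mem_Icc.1 (floor_cast_div_mul_mem_Icc ht hn hx2)
  rw [cellIndex, mem_Icc]
  omega

lemma sub_lt_of_cellIndex_eq {t : ℝ} (ht : 0 < t) {m n : ℕ} (hm : 1 ≤ m) (hn : 1 ≤ n)
    {x y : ℕ × ℕ} (hxy : x ≤ y) (h : cellIndex t m n x = cellIndex t m n y) :
    (y.1 : ℝ) - x.1 < t * m ∧ (y.2 : ℝ) - x.2 < t * n :=
  sub_lt_of_floor_add_floor_eq (mul_pos ht (Nat.cast_pos.2 hm)) (mul_pos ht (Nat.cast_pos.2 hn))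
    (Nat.cast_le.2 hxy.1) (Nat.cast_le.2 hxy.2) h

theorem stmt_12_general (ℓ m n : ℕ) (hm : 1 ≤ m) (hn : 1 ≤ n)
    (t : ℝ) (ht0 : 0 < t) (ht1 : t ≤ 1)
    (a p : ℕ → ℕ)
    (ha_mono : ∀ j, 1 ≤ j → j < ℓ → a j ≤ a (j + 1))
    (hp_mono : ∀ j, 1 ≤ j → j < ℓ → p j ≤ p (j + 1))
    (ha_range : ∀ j ∈ Finset.Icc 1 ℓ, a j ∈ Finset.Icc 1 m)
    (hp_range : ∀ j ∈ Finset.Icc 1 ℓ, p j ∈ Finset.Icc 1 n) :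
    t * ℓ ^ 2 / 16 ≤
      (Set.ncard {x : ℕ × ℕ | 1 ≤ x.1 ∧ x.1 ≤ x.2 ∧ x.2 ≤ ℓ ∧
        (a x.2 : ℝ) - (a x.1 : ℝ) ≤ t * m ∧
        (p x.2 : ℝ) - (p x.1 : ℝ) ≤ t * n} : ℝ) := by
  set S := {x : ℕ × ℕ | 1 ≤ x.1 ∧ x.1 ≤ x.2 ∧ x.2 ≤ ℓ ∧
    (a x.2 : ℝ) - (a x.1 : ℝ) ≤ t * m ∧ (p x.2 : ℝ) - (p x.1 : ℝ) ≤ t * n}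
  have hmono {b : ℕ → ℕ} (hb : ∀ j, 1 ≤ j → j < ℓ → b j ≤ b (j + 1)) :
      MonotoneOn b (Set.Icc 1 ℓ) :=
    monotoneOn_of_le_add_one Set.ordConnected_Icc fun j _ hj hj1 => hb j hj.1 hj1.2
  set key : ℕ → ℤ := fun j => cellIndex t m n (a j, p j)
  set T := {x ∈ Icc 1 ℓ ×ˢ Icc 1 ℓ | x.1 ≤ x.2 ∧ key x.1 = key x.2}
  have hTS : (T : Set (ℕ × ℕ)) ⊆ S := by
    rintro ⟨i, j⟩ hx
    simp only [T, coe_filter, mem_product, mem_Icc] at hx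
    obtain ⟨⟨hi, hj⟩, hij, hkey⟩ := hx
    have hclose := sub_lt_of_cellIndex_eq ht0 hm hn
      ⟨hmono ha_mono hi hj hij, hmono hp_mono hi hj hij⟩ hkey
    exact ⟨hi.1, hij, hj.2, hclose.1.le, hclose.2.le⟩
  have hSfin : S.Finite :=
    ((Set.finite_Iic ℓ).prod (Set.finite_Iic ℓ)).subset fun x hx =>
      ⟨hx.2.1.trans hx.2.2.1, hx.2.2.1⟩
  have hcount := mul_sq_card_le_six_mul_card_pairs ht0 ht1 (Icc 1 ℓ) key fun j hj =>
    cellIndex_mem_Icc ht0 hm hn (mem_Icc.1 (ha_range j hj)).2 (mem_Icc.1 (hp_range j hj)).2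
  rw [Nat.card_Icc, Nat.add_sub_cancel] at hcount
  calc t * ℓ ^ 2 / 16 ≤ #T := by linarith [(Nat.cast_nonneg #T : (0 : ℝ) ≤ #T)]
    _ ≤ S.ncard := by
      exact_mod_cast (Set.ncard_coe_finset T).symm.le.trans (Set.ncard_le_ncard hTS hSfin)

/-- Along a doubly monotone list of length ℓ, at least tℓ²/16 ordered pairs
of positions are simultaneously t-close in both coordinates. -/
theorem stmt_12 (ℓ m n : ℕ) (hℓ : 1 ≤ ℓ) (hm : 1 ≤ m) (hn : 1 ≤ n)
    (t : ℝ) (ht0 : 0 < t) (ht1 : t ≤ 1)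
    (a p : ℕ → ℕ)
    (ha_mono : ∀ j, 1 ≤ j → j < ℓ → a j ≤ a (j + 1))
    (hp_mono : ∀ j, 1 ≤ j → j < ℓ → p j ≤ p (j + 1))
    (ha_range : ∀ j ∈ Finset.Icc 1 ℓ, a j ∈ Finset.Icc 1 m)
    (hp_range : ∀ j ∈ Finset.Icc 1 ℓ, p j ∈ Finset.Icc 1 n) :
    t * ℓ ^ 2 / 16 ≤
      (Set.ncard {x : ℕ × ℕ | 1 ≤ x.1 ∧ x.1 ≤ x.2 ∧ x.2 ≤ ℓ ∧
        (a x.2 : ℝ) - (a x.1 : ℝ) ≤ t * m ∧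
        (p x.2 : ℝ) - (p x.1 : ℝ) ≤ t * n} : ℝ) :=
  stmt_12_general ℓ m n hm hn t ht0 ht1 a p ha_mono hp_mono ha_range hp_range
end
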